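/- Let Φ ∈ ℝ^{N×m} satisfy ΦᵀΦ = I_m, let p'': ℝ → ℝ be Lipschitz with constant L, and define H(α) = ΘᵀΘ + λ Φᵀ D(Φα) Φ where D(u) is the diagonal matrix with D(u)ᵢᵢ = p''(uᵢ), Θ ∈ ℝ^{r×m}, and λ > 0. Then H is Lipschitz continuous in the operator norm with constant λL: ‖H(α) − H(β)‖₂ ≤ λL·|α − β| for all α, β ∈ ℝ^m. -/

import Mathlib

/-!
The `ΘᵀΘ` terms cancel, so `H(α) - H(β) = λ Φᵀ (D(Φα) - D(Φβ)) Φ`. Since `ΦᵀΦ = 1` forces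
`‖Φ‖ ≤ 1`, conjugation by `Φ` does not increase the operator norm, and the operator norm of the
diagonal matrix `D(Φα) - D(Φβ)` is its largest entry, at most `L |Φ(α - β)| ≤ L |α - β|`.
-/

open Matrix
open scoped Matrix.Norms.L2Operator

namespace Matrix

variable {𝕜 : Type*} [RCLike 𝕜] {m n : Type*} [Fintype m] [Fintype n] [DecidableEq n]

lemma l2_opNorm_le_one_of_conjTranspose_mul_self_eq_one {Φ : Matrix m n 𝕜}
    (hΦ : Φᴴ * Φ = 1) : ‖Φ‖ ≤ 1 := by
  have hΦΦ : ‖Φ‖ * ‖Φ‖ ≤ 1 := by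
    rw [← l2_opNorm_conjTranspose_mul_self, hΦ, ← diagonal_one, l2_opNorm_diagonal]
    exact pi_norm_le_iff_of_nonneg zero_le_one |>.mpr fun _ ↦ norm_one.le
  nlinarith [norm_nonneg Φ]

lemma l2_opNorm_conjTranspose_mul_mul_le [DecidableEq m] {Φ : Matrix m n 𝕜} (hΦ : ‖Φ‖ ≤ 1)
    (A : Matrix m m 𝕜) : ‖Φᴴ * A * Φ‖ ≤ ‖A‖ :=
  calc ‖Φᴴ * A * Φ‖ ≤ ‖Φᴴ‖ * ‖A‖ * ‖Φ‖ :=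
        (l2_opNorm_mul _ _).trans (by gcongr; exact l2_opNorm_mul _ _)
    _ ≤ 1 * ‖A‖ * 1 := by
        rw [l2_opNorm_conjTranspose]; gcongr
    _ = ‖A‖ := by ring

lemma norm_toEuclideanLin_apply_le (A : Matrix m n 𝕜) (x : EuclideanSpace 𝕜 n) :
    ‖toEuclideanLin A x‖ ≤ ‖A‖ * ‖x‖ :=
  ((toEuclideanLin.trans LinearMap.toContinuousLinearMap) A).le_opNorm x

lemma l2_opNorm_diagonal_sub_diagonal_le {f : 𝕜 → 𝕜} {L : ℝ}
    (hf : ∀ x y, ‖f x - f y‖ ≤ L * ‖x - y‖) (hL : 0 ≤ L) (u v : EuclideanSpace 𝕜 n) :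
    ‖diagonal (fun i ↦ f (u i)) - diagonal (fun i ↦ f (v i))‖ ≤ L * ‖u - v‖ := by
  rw [diagonal_sub, l2_opNorm_diagonal]
  refine pi_norm_le_iff_of_nonneg (by positivity) |>.mpr fun i ↦ ?_
  calc ‖f (u i) - f (v i)‖ ≤ L * ‖u i - v i‖ := hf _ _
    _ ≤ L * ‖u - v‖ := by gcongr; exact PiLp.norm_apply_le (u - v) i

end Matrix

/-- The Hessian `H(α) = ΘᵀΘ + λ Φᵀ D(Φα) Φ` of the penalized C-DEIM cost, where
`D(u)ᵢᵢ = p''(uᵢ)` and `p''` is Lipschitz with constant `L`, is Lipschitz in the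
operator norm with constant `λL`. -/
theorem hessian_lipschitz
    {N r m : ℕ}
    (Φ : Matrix (Fin N) (Fin m) ℝ) (hΦ : Φᵀ * Φ = 1)
    (Θ : Matrix (Fin r) (Fin m) ℝ)
    (p'' : ℝ → ℝ) (L : ℝ) (hLip : ∀ x y : ℝ, |p'' x - p'' y| ≤ L * |x - y|)
    (lam : ℝ) (hlam : 0 < lam) :
    ∀ α β : EuclideanSpace ℝ (Fin m),
      ‖(Θᵀ * Θ + lam • (Φᵀ * Matrix.diagonal (fun i => p'' (Matrix.toEuclideanLin Φ α i)) * Φ))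
        - (Θᵀ * Θ + lam • (Φᵀ * Matrix.diagonal (fun i => p'' (Matrix.toEuclideanLin Φ β i)) * Φ))‖
        ≤ lam * L * ‖α - β‖ := by
  intro α β
  have hL : 0 ≤ L := by simpa using (abs_nonneg _).trans (hLip 1 0)
  rw [← conjTranspose_eq_transpose_of_trivial] at hΦ ⊢
  have hΦ₁ : ‖Φ‖ ≤ 1 := l2_opNorm_le_one_of_conjTranspose_mul_self_eq_one hΦ
  rw [add_sub_add_left_eq_sub, ← smul_sub, ← Matrix.sub_mul, ← Matrix.mul_sub, norm_smul,
    Real.norm_of_nonneg hlam.le, mul_assoc]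
  gcongr
  calc _ ≤ ‖diagonal (fun i ↦ p'' (toEuclideanLin Φ α i))
          - diagonal (fun i ↦ p'' (toEuclideanLin Φ β i))‖ :=
        l2_opNorm_conjTranspose_mul_mul_le hΦ₁ _
    _ ≤ L * ‖toEuclideanLin Φ α - toEuclideanLin Φ β‖ :=
        l2_opNorm_diagonal_sub_diagonal_le hLip hL _ _
    _ ≤ L * ‖α - β‖ := by
        rw [← map_sub]
        gcongr
        exact (norm_toEuclideanLin_apply_le Φ _).trans (mul_le_of_le_one_left (norm_nonneg _) hΦ₁)
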